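/- Let ψ(y)(n) = −y(−n) for finitely supported y : ℤ → ℤ. Suppose φ(y) > 0 and let f̃(y) be y minus 1 at positions n_f, n_f+1 (variant monomial rule). Then ε(ψ(y)) > 0 and ẽ(ψ(y)) = ψ(f̃(y)), where ẽ(z) adds 1 at positions n_e(z), n_e(z)+1 with n_e(z) = max{n : ∑_{k≤n} z(k) = φ(z)}. -/
import Mathlib


open Finset

/-- Partial sum `∑_{k ≤ n} y k` of a finitely supported `y : ℤ → ℤ`. -/
def psum (y : ℤ →₀ ℤ) (n : ℤ) : ℤ := ∑ k ∈ y.support.filter (fun k => k ≤ n), y k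

/-- Tail sum `∑_{k > n} y k`. -/
def tgt (y : ℤ →₀ ℤ) (n : ℤ) : ℤ := ∑ k ∈ y.support.filter (fun k => n < k), y k

/-- Tail sum `∑_{k ≥ n} y k`. -/
def tge (y : ℤ →₀ ℤ) (n : ℤ) : ℤ := ∑ k ∈ y.support.filter (fun k => n ≤ k), y k

/-- Total weight `∑_n y n`. -/
def wt (y : ℤ →₀ ℤ) : ℤ := ∑ k ∈ y.support, y k

/-- `φ(y) = max {∑_{k ≤ n} y k : n ∈ ℤ}` (the set is finite and nonempty). -/
noncomputable def phi (y : ℤ →₀ ℤ) : ℤ := sSup (Set.range (psum y))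

/-- `ε(y) = max {−∑_{k > n} y k : n ∈ ℤ}` (the set is finite and nonempty). -/
noncomputable def eps (y : ℤ →₀ ℤ) : ℤ := sSup (Set.range (fun n => - tgt y n))

/-- `n_f = min {n : ∑_{k ≤ n} y k = φ(y)}`. -/
noncomputable def nfPos (y : ℤ →₀ ℤ) : ℤ := sInf {n | psum y n = phi y}

/-- `n_e = max {n : ∑_{k ≤ n} y k = φ(y)}` (variant monomial crystal convention). -/
noncomputable def nePos (y : ℤ →₀ ℤ) : ℤ := sSup {n | psum y n = phi y}

/-- Variant monomial operator `f̃`: subtract 1 at positions `n_f` and `n_f + 1`. -/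
noncomputable def ftil (y : ℤ →₀ ℤ) : ℤ →₀ ℤ :=
  y - Finsupp.single (nfPos y) 1 - Finsupp.single (nfPos y + 1) 1

/-- Variant monomial operator `ẽ`: add 1 at positions `n_e` and `n_e + 1`. -/
noncomputable def etil (y : ℤ →₀ ℤ) : ℤ →₀ ℤ :=
  y + Finsupp.single (nePos y) 1 + Finsupp.single (nePos y + 1) 1

/-- The duality map `ψ(y)(n) = −y(−n)`. -/
noncomputable def psiM (y : ℤ →₀ ℤ) : ℤ →₀ ℤ :=
  - Finsupp.equivMapDomain (Equiv.neg ℤ) y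

lemma psiM_apply (y : ℤ →₀ ℤ) (n : ℤ) : psiM y n = - y (-n) := by
  simp [psiM, Finsupp.equivMapDomain_apply]

def negEmb : ℤ ↪ ℤ := ⟨Neg.neg, neg_injective⟩

lemma support_psiM_subset (y : ℤ →₀ ℤ) : (psiM y).support ⊆ y.support.map negEmb := by
  intro x hx
  rw [Finsupp.mem_support_iff, psiM_apply] at hx
  simp only [Finset.mem_map, Finsupp.mem_support_iff, negEmb, Function.Embedding.coeFn_mk]
  exact ⟨-x, by simpa using hx, by ring⟩

lemma psum_superset (y : ℤ →₀ ℤ) (S : Finset ℤ) (hS : y.support ⊆ S) (n : ℤ) :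
    psum y n = ∑ k ∈ S.filter (fun k => k ≤ n), y k := by
  apply Finset.sum_subset (Finset.filter_subset_filter _ hS)
  intro x hx hnx
  rw [Finset.mem_filter] at hx hnx
  by_contra h
  exact hnx ⟨Finsupp.mem_support_iff.mpr h, hx.2⟩

lemma wt_superset (y : ℤ →₀ ℤ) (S : Finset ℤ) (hS : y.support ⊆ S) :
    wt y = ∑ k ∈ S, y k := by
  apply Finset.sum_subset hS
  intro x _ hnx
  by_contra h
  exact hnx (Finsupp.mem_support_iff.mpr h)

lemma psum_psiM (y : ℤ →₀ ℤ) (n : ℤ) : psum (psiM y) n = - tge y (-n) := by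
  rw [psum_superset _ _ (support_psiM_subset y) n]
  rw [show (y.support.map negEmb).filter (fun k => k ≤ n)
      = (y.support.filter (fun j => -n ≤ j)).map negEmb by
    rw [Finset.filter_map]
    congr 1
    apply Finset.filter_congr
    intro x _
    simp only [negEmb, Function.Embedding.coeFn_mk, Function.comp]
    omega]
  rw [Finset.sum_map]
  simp only [negEmb, Function.Embedding.coeFn_mk, psiM_apply, neg_neg]
  rw [tge, ← Finset.sum_neg_distrib]

lemma wt_eq (y : ℤ →₀ ℤ) (n : ℤ) : wt y = psum y n + tgt y n := by
  rw [wt, psum, tgt, ← Finset.sum_filter_add_sum_filter_not y.support (fun k => k ≤ n)]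
  congr 1
  apply Finset.sum_congr _ (fun _ _ => rfl)
  apply Finset.filter_congr
  intro x _
  simp only [not_le]

lemma tge_eq (y : ℤ →₀ ℤ) (n : ℤ) : tge y n = tgt y (n - 1) := by
  rw [tge, tgt]
  apply Finset.sum_congr _ (fun _ _ => rfl)
  apply Finset.filter_congr
  intro x _
  constructor <;> (intro; omega)

lemma wt_psiM (y : ℤ →₀ ℤ) : wt (psiM y) = - wt y := by
  rw [wt_superset _ _ (support_psiM_subset y), Finset.sum_map]
  simp only [negEmb, Function.Embedding.coeFn_mk, psiM_apply, neg_neg]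
  rw [wt, ← Finset.sum_neg_distrib]

lemma psum_psiM' (y : ℤ →₀ ℤ) (n : ℤ) : psum (psiM y) n = psum y (-n - 1) - wt y := by
  rw [psum_psiM, tge_eq]
  have := wt_eq y (-n - 1)
  omega

lemma tgt_psiM (y : ℤ →₀ ℤ) (n : ℤ) : - tgt (psiM y) n = psum y (-n - 1) := by
  have h1 := wt_eq (psiM y) n
  have h2 := psum_psiM' y n
  have h3 := wt_psiM y
  omega

lemma range_psum_finite (y : ℤ →₀ ℤ) : (Set.range (psum y)).Finite := by
  apply Set.Finite.subset ((y.support.powerset : Finset (Finset ℤ)).finite_toSet.image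
    (fun s => ∑ k ∈ s, y k))
  rintro _ ⟨n, rfl⟩
  exact ⟨y.support.filter (fun k => k ≤ n), Finset.mem_coe.mpr (Finset.mem_powerset.mpr (Finset.filter_subset _ _)), rfl⟩

lemma psum_le_phi (y : ℤ →₀ ℤ) (n : ℤ) : psum y n ≤ phi y :=
  le_csSup (range_psum_finite y).bddAbove ⟨n, rfl⟩

lemma exists_psum_eq_phi (y : ℤ →₀ ℤ) : ∃ n, psum y n = phi y := by
  have := (Set.range_nonempty (psum y)).csSup_mem (range_psum_finite y)
  exact this

lemma psum_small (y : ℤ →₀ ℤ) (n : ℤ) (h : ∀ k ∈ y.support, n < k) : psum y n = 0 := by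
  rw [psum]
  apply Finset.sum_eq_zero
  intro x hx
  rw [Finset.mem_filter] at hx
  exact absurd hx.2 (not_le.mpr (h x hx.1))


/-- `ψ` intertwines `f̃` and `ẽ` (variant monomial operators): if `φ(y) > 0` then
`ε(ψ y) > 0` and `ẽ(ψ y) = ψ(f̃ y)`. -/
theorem stmt11 (y : ℤ →₀ ℤ) (hpos : 0 < phi y) :
    0 < eps (psiM y) ∧ etil (psiM y) = psiM (ftil y) := by
  -- support nonempty
  have hysupp : y.support.Nonempty := by
    by_contra h
    obtain ⟨n, hn⟩ := exists_psum_eq_phi y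
    rw [Finset.not_nonempty_iff_eq_empty] at h
    rw [psum, h] at hn
    simp at hn
    omega
  set A := {n | psum y n = phi y} with hA
  have hAne : A.Nonempty := exists_psum_eq_phi y
  have hAbdd : BddBelow A := by
    refine ⟨y.support.min' hysupp, fun n hn => ?_⟩
    by_contra hlt
    push_neg at hlt
    have : psum y n = 0 := psum_small y n (fun k hk => lt_of_lt_of_le hlt (y.support.min'_le k hk))
    rw [Set.mem_setOf_eq, this] at hn
    omega
  have hnf_mem : psum y (nfPos y) = phi y := Int.csInf_mem hAne hAbdd
  have hnf_le : ∀ n ∈ A, nfPos y ≤ n := fun n hn => csInf_le hAbdd hn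
  -- eps (psiM y) = phi y
  have heps : eps (psiM y) = phi y := by
    apply le_antisymm
    · apply csSup_le (Set.range_nonempty _)
      rintro _ ⟨n, rfl⟩
      show - tgt (psiM y) n ≤ phi y
      rw [tgt_psiM]
      exact psum_le_phi y _
    · have hb : BddAbove (Set.range (fun n => - tgt (psiM y) n)) := by
        apply BddAbove.mono _ (range_psum_finite y).bddAbove
        rintro _ ⟨n, rfl⟩
        exact ⟨-n - 1, (tgt_psiM y n).symm⟩
      calc phi y = - tgt (psiM y) (-(nfPos y) - 1) := by
              rw [tgt_psiM]; rw [show -(-(nfPos y) - 1) - 1 = nfPos y by ring]; exact hnf_mem.symm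
        _ ≤ _ := le_csSup hb ⟨-(nfPos y) - 1, rfl⟩
  -- phi (psiM y) = phi y - wt y
  have hphi : phi (psiM y) = phi y - wt y := by
    apply le_antisymm
    · apply csSup_le (Set.range_nonempty _)
      rintro _ ⟨n, rfl⟩
      rw [psum_psiM']
      have := psum_le_phi y (-n - 1)
      omega
    · calc phi y - wt y = psum (psiM y) (-(nfPos y) - 1) := by
            rw [psum_psiM', show -(-(nfPos y) - 1) - 1 = nfPos y by ring, hnf_mem]
      _ ≤ _ := psum_le_phi (psiM y) _
  -- nePos (psiM y) = -(nfPos y) - 1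
  have hne : nePos (psiM y) = -(nfPos y) - 1 := by
    apply IsGreatest.csSup_eq
    constructor
    · rw [Set.mem_setOf_eq, psum_psiM', show -(-(nfPos y) - 1) - 1 = nfPos y by ring,
        hnf_mem, hphi]
    · intro n hn
      rw [Set.mem_setOf_eq, psum_psiM', hphi] at hn
      have : psum y (-n - 1) = phi y := by omega
      have := hnf_le (-n - 1) this
      omega
  refine ⟨by omega, ?_⟩
  ext n
  rw [etil, ftil, hne]
  simp only [Finsupp.add_apply, Finsupp.sub_apply, psiM_apply, Finsupp.single_apply]
  have h1 : (nfPos y = -n) ↔ (-(nfPos y) - 1 + 1 = n) := by omega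
  have h2 : (nfPos y + 1 = -n) ↔ (-(nfPos y) - 1 = n) := by omega
  split_ifs <;> omega
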